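/- Lower bound forcing p ≥ 2/3 in the bilinear Heisenberg Kakeya estimate: if for some p > 0 and all δ ∈ (0,1) the inequality ∫_{ℝ³}(Σ_{T₁∈𝒯₁}χ_{T₁})^p(Σ_{T₂∈𝒯₂}χ_{T₂})^p ≤ C δ^4((#𝒯₁)^p(#𝒯₂)^p + #𝒯₁ + #𝒯₂) holds for all transversal pairs of families of Heisenberg δ-tubes, and there exist families 𝒯₁, 𝒯₂ with #𝒯₁ = #𝒯₂ ∼ δ⁻³ such that each Σ_{T_j}χ_{T_j} ≥ c·χ_{B} on a fixed ball B of positive measure, then δ^{4-6p} ≳ 1 for all small δ, hence p ≥ 2/3. -/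

import Mathlib

open MeasureTheory

/-- Heisenberg group multiplication on ℝ³. -/
noncomputable def hMul (p q : ℝ × ℝ × ℝ) : ℝ × ℝ × ℝ :=
  (p.1 + q.1, p.2.1 + q.2.1, p.2.2 + q.2.2 + (p.1 * q.2.1 - q.1 * p.2.1) / 2)

/-- Heisenberg group inverse. -/
def hInv (p : ℝ × ℝ × ℝ) : ℝ × ℝ × ℝ := (-p.1, -p.2.1, -p.2.2)

/-- The Korányi gauge. -/
noncomputable def hNorm (p : ℝ × ℝ × ℝ) : ℝ :=
  ((p.1 ^ 2 + p.2.1 ^ 2) ^ 2 + 16 * p.2.2 ^ 2) ^ ((1 : ℝ) / 4)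

/-- The Korányi metric. -/
noncomputable def hDist (p q : ℝ × ℝ × ℝ) : ℝ := hNorm (hMul (hInv q) p)

/-- The Heisenberg δ-tube centred at p with horizontal direction (a,b,0). -/
noncomputable def hTube (δ : ℝ) (p : ℝ × ℝ × ℝ) (a b : ℝ) : Set (ℝ × ℝ × ℝ) :=
  {q | ∃ s ∈ Set.Icc (-(1 / 2) : ℝ) (1 / 2), hDist q (hMul p (s * a, s * b, 0)) ≤ δ}

/-- A tube datum is a centre together with a horizontal direction. -/
abbrev TubeData := (ℝ × ℝ × ℝ) × (ℝ × ℝ)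

/-- The indicator counting function of a family of Heisenberg δ-tubes. -/
noncomputable def tubeSum (δ : ℝ) (𝒯 : Finset TubeData) (x : ℝ × ℝ × ℝ) : ℝ :=
  ∑ T ∈ 𝒯, Set.indicator (hTube δ T.1 T.2.1 T.2.2) (fun _ => (1 : ℝ)) x

/-! Test the bilinear inequality on the foliating families. On `B` both counting functions are
at least `c`, so the left side is at least `c ^ (2p) |B|`, while `#𝒯ⱼ ≲ δ⁻³` makes the right side
`≲ δ ^ (4 - 6p) + δ`. For `p < 2/3` this tends to `0` with `δ`, contradicting `|B| > 0`.
The integrals are meaningful because a tube is the continuous image of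
`[-1/2, 1/2] × (closed Korányi ball)`, hence compact; so counting functions are measurable,
bounded and compactly supported, and `|B| < ∞`. -/

open Set Filter Topology

lemma hMul_hMul_hInv_left (g q : ℝ × ℝ × ℝ) : hMul g (hMul (hInv g) q) = q := by
  simp only [hMul, hInv]
  ext <;> simp only <;> ring

lemma hMul_hInv_hMul_left (g w : ℝ × ℝ × ℝ) : hMul (hInv g) (hMul g w) = w := by
  simp only [hMul, hInv]
  ext <;> simp only <;> ring

lemma continuous_hNorm : Continuous hNorm :=
  Continuous.rpow_const (by fun_prop) fun _ => Or.inr (by norm_num)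

lemma hNorm_nonneg (w : ℝ × ℝ × ℝ) : 0 ≤ hNorm w := by
  unfold hNorm
  positivity

lemma hNorm_pow_four (w : ℝ × ℝ × ℝ) :
    hNorm w ^ 4 = (w.1 ^ 2 + w.2.1 ^ 2) ^ 2 + 16 * w.2.2 ^ 2 := by
  rw [hNorm, ← Real.rpow_natCast, ← Real.rpow_mul (by positivity)]
  norm_num

lemma abs_fst_le_hNorm (w : ℝ × ℝ × ℝ) : |w.1| ≤ hNorm w := by
  refine (pow_le_pow_iff_left₀ (abs_nonneg _) (hNorm_nonneg w) four_ne_zero).mp ?_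
  rw [hNorm_pow_four, (by decide : Even 4).pow_abs]
  nlinarith [sq_nonneg w.1, sq_nonneg w.2.1, sq_nonneg w.2.2]

lemma abs_snd_fst_le_hNorm (w : ℝ × ℝ × ℝ) : |w.2.1| ≤ hNorm w := by
  refine (pow_le_pow_iff_left₀ (abs_nonneg _) (hNorm_nonneg w) four_ne_zero).mp ?_
  rw [hNorm_pow_four, (by decide : Even 4).pow_abs]
  nlinarith [sq_nonneg w.1, sq_nonneg w.2.1, sq_nonneg w.2.2]

lemma four_mul_abs_snd_snd_le_hNorm_sq (w : ℝ × ℝ × ℝ) : 4 * |w.2.2| ≤ hNorm w ^ 2 := by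
  refine (pow_le_pow_iff_left₀ (by positivity) (by positivity) two_ne_zero).mp ?_
  rw [← pow_mul, hNorm_pow_four, mul_pow, sq_abs]
  nlinarith [sq_nonneg (w.1 ^ 2 + w.2.1 ^ 2)]

lemma norm_le_hNorm_add_sq (w : ℝ × ℝ × ℝ) : ‖w‖ ≤ hNorm w + hNorm w ^ 2 := by
  have h₁ := abs_fst_le_hNorm w
  have h₂ := abs_snd_fst_le_hNorm w
  have h₃ := four_mul_abs_snd_snd_le_hNorm_sq w
  have h₀ := hNorm_nonneg w
  simp only [Prod.norm_def, Real.norm_eq_abs, max_le_iff]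
  refine ⟨?_, ?_, ?_⟩ <;> nlinarith [abs_nonneg w.2.2]

lemma isCompact_hNorm_le (δ : ℝ) : IsCompact {w | hNorm w ≤ δ} := by
  refine Metric.isCompact_of_isClosed_isBounded (isClosed_le continuous_hNorm continuous_const)
    ((Metric.isBounded_closedBall (x := 0) (r := δ + δ ^ 2)).subset fun w hw => ?_)
  have h₀ := hNorm_nonneg w
  rw [mem_closedBall_zero_iff]
  exact (norm_le_hNorm_add_sq w).trans (add_le_add hw (pow_le_pow_left₀ h₀ hw 2))

lemma hTube_eq_image (δ : ℝ) (P : ℝ × ℝ × ℝ) (a b : ℝ) :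
    hTube δ P a b = (fun x : ℝ × (ℝ × ℝ × ℝ) => hMul (hMul P (x.1 * a, x.1 * b, 0)) x.2) ''
      (Icc (-(1 / 2)) (1 / 2) ×ˢ {w | hNorm w ≤ δ}) := by
  ext q
  constructor
  · rintro ⟨s, hs, hq⟩
    exact ⟨(s, hMul (hInv (hMul P (s * a, s * b, 0))) q), ⟨hs, hq⟩, hMul_hMul_hInv_left _ _⟩
  · rintro ⟨⟨s, w⟩, ⟨hs, hw⟩, rfl⟩
    refine ⟨s, hs, ?_⟩
    rwa [hDist, hMul_hInv_hMul_left]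

lemma isCompact_hTube (δ : ℝ) (P : ℝ × ℝ × ℝ) (a b : ℝ) : IsCompact (hTube δ P a b) := by
  rw [hTube_eq_image]
  exact (isCompact_Icc.prod (isCompact_hNorm_le δ)).image (by simp only [hMul]; fun_prop)

lemma tubeSum_nonneg (δ : ℝ) (𝒯 : Finset TubeData) (x : ℝ × ℝ × ℝ) : 0 ≤ tubeSum δ 𝒯 x :=
  Finset.sum_nonneg fun _ _ => indicator_nonneg (fun _ _ => zero_le_one) x

lemma tubeSum_le_card (δ : ℝ) (𝒯 : Finset TubeData) (x : ℝ × ℝ × ℝ) :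
    tubeSum δ 𝒯 x ≤ 𝒯.card :=
  calc tubeSum δ 𝒯 x ≤ 𝒯.card • (1 : ℝ) :=
        Finset.sum_le_card_nsmul _ _ _ fun _ _ => indicator_le_self' (fun _ _ => zero_le_one) x
    _ = 𝒯.card := nsmul_one _

lemma measurable_tubeSum (δ : ℝ) (𝒯 : Finset TubeData) : Measurable (tubeSum δ 𝒯) :=
  Finset.measurable_sum _ fun T _ =>
    measurable_const.indicator (isCompact_hTube δ T.1 T.2.1 T.2.2).isClosed.measurableSet

lemma hasCompactSupport_tubeSum (δ : ℝ) (𝒯 : Finset TubeData) :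
    HasCompactSupport (tubeSum δ 𝒯) :=
  .intro (𝒯.finite_toSet.isCompact_biUnion fun T _ => isCompact_hTube δ T.1 T.2.1 T.2.2)
    fun _ hx => Finset.sum_eq_zero fun _ hT =>
      indicator_of_notMem (fun h => hx (mem_biUnion (Finset.mem_coe.mpr hT) h)) _

lemma volume_lt_top_of_le_tubeSum {δ c : ℝ} (hc : 0 < c) {𝒯 : Finset TubeData}
    {B : Set (ℝ × ℝ × ℝ)} (hB : ∀ x ∈ B, c ≤ tubeSum δ 𝒯 x) : volume B < ⊤ :=
  (measure_mono fun x hx => subset_tsupport _ (hc.trans_le (hB x hx)).ne').trans_lt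
    (hasCompactSupport_tubeSum δ 𝒯).measure_lt_top

lemma integrable_tubeSum_rpow_mul {δ p : ℝ} (hp : 0 < p) (𝒯₁ 𝒯₂ : Finset TubeData) :
    Integrable fun x => tubeSum δ 𝒯₁ x ^ p * tubeSum δ 𝒯₂ x ^ p := by
  have hf₁ : HasCompactSupport fun x => tubeSum δ 𝒯₁ x ^ p :=
    (hasCompactSupport_tubeSum δ 𝒯₁).comp_left (g := (· ^ p)) (Real.zero_rpow hp.ne')
  have hf := hf₁.mul_right (f' := fun x => tubeSum δ 𝒯₂ x ^ p)
  have hf_meas := ((measurable_tubeSum δ 𝒯₁).pow_const p).mul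
    ((measurable_tubeSum δ 𝒯₂).pow_const p)
  refine (integrableOn_iff_integrable_of_support_subset (subset_tsupport _)).mp
    (IntegrableOn.of_bound hf.measure_lt_top hf_meas.aestronglyMeasurable
      ((𝒯₁.card : ℝ) ^ p * (𝒯₂.card : ℝ) ^ p) (ae_of_all _ fun x => ?_))
  have h₁ := tubeSum_nonneg δ 𝒯₁ x
  have h₂ := tubeSum_nonneg δ 𝒯₂ x
  rw [Real.norm_of_nonneg (by positivity)]
  gcongr <;> exact tubeSum_le_card _ _ _

lemma rpow_mul_rpow_mul_volume_le_integral {δ p c : ℝ} (hp : 0 < p) (hc : 0 < c)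
    {𝒯₁ 𝒯₂ : Finset TubeData} {B : Set (ℝ × ℝ × ℝ)} (hB : MeasurableSet B)
    (h₁ : ∀ x ∈ B, c ≤ tubeSum δ 𝒯₁ x) (h₂ : ∀ x ∈ B, c ≤ tubeSum δ 𝒯₂ x) :
    c ^ p * c ^ p * volume.real B ≤ ∫ x, tubeSum δ 𝒯₁ x ^ p * tubeSum δ 𝒯₂ x ^ p := by
  have hint := integrable_tubeSum_rpow_mul hp 𝒯₁ 𝒯₂ (δ := δ)
  calc c ^ p * c ^ p * volume.real B
      ≤ ∫ x in B, tubeSum δ 𝒯₁ x ^ p * tubeSum δ 𝒯₂ x ^ p :=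
        setIntegral_ge_of_const_le_real hB (volume_lt_top_of_le_tubeSum hc h₁).ne
          (fun x hx => mul_le_mul (Real.rpow_le_rpow hc.le (h₁ x hx) hp.le)
            (Real.rpow_le_rpow hc.le (h₂ x hx) hp.le) (by positivity)
            (Real.rpow_nonneg (tubeSum_nonneg _ _ _) _)) hint.integrableOn
    _ ≤ ∫ x, tubeSum δ 𝒯₁ x ^ p * tubeSum δ 𝒯₂ x ^ p :=
        setIntegral_le_integral hint (ae_of_all _ fun x =>
          mul_nonneg (Real.rpow_nonneg (tubeSum_nonneg _ _ _) _)
            (Real.rpow_nonneg (tubeSum_nonneg _ _ _) _))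

lemma pow_four_mul_le_of_le_mul_inv_pow_three {δ p M N₁ N₂ : ℝ} (hδ : 0 < δ) (hp : 0 ≤ p)
    (hN₁ : 0 ≤ N₁) (hN₂ : 0 ≤ N₂) (h₁ : N₁ ≤ M * δ⁻¹ ^ 3) (h₂ : N₂ ≤ M * δ⁻¹ ^ 3) :
    δ ^ 4 * (N₁ ^ p * N₂ ^ p + N₁ + N₂) ≤ M ^ p * M ^ p * δ ^ (4 - 6 * p) + 2 * M * δ := by
  have hM : 0 ≤ M := nonneg_of_mul_nonneg_left (hN₁.trans h₁) (by positivity)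
  have hrpow : ∀ N, 0 ≤ N → N ≤ M * δ⁻¹ ^ 3 → N ^ p ≤ M ^ p * δ ^ (-3 * p) := fun N hN h => by
    calc N ^ p ≤ (M * δ⁻¹ ^ 3) ^ p := Real.rpow_le_rpow hN h hp
      _ = M ^ p * δ ^ (-3 * p) := by
        rw [Real.mul_rpow hM (by positivity), Real.rpow_mul hδ.le, Real.rpow_neg hδ.le,
          Real.rpow_ofNat, inv_pow]
  calc δ ^ 4 * (N₁ ^ p * N₂ ^ p + N₁ + N₂)
      ≤ δ ^ 4 * (M ^ p * δ ^ (-3 * p) * (M ^ p * δ ^ (-3 * p)) + M * δ⁻¹ ^ 3 + M * δ⁻¹ ^ 3) := by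
        gcongr
        · exact hrpow N₁ hN₁ h₁
        · exact hrpow N₂ hN₂ h₂
    _ = M ^ p * M ^ p * δ ^ (4 - 6 * p) + 2 * M * δ := by
      rw [show 4 - 6 * p = ((4 : ℕ) : ℝ) + -3 * p + -3 * p by push_cast; ring,
        Real.rpow_add hδ, Real.rpow_add hδ, Real.rpow_natCast]
      field_simp
      ring

lemma nonpos_of_forall_le_rpow_add_mul {K A B e : ℝ} (he : 0 < e)
    (h : ∀ δ ∈ Ioo (0 : ℝ) 1, K ≤ A * δ ^ e + B * δ) : K ≤ 0 := by
  have hlim : Tendsto (fun δ : ℝ => A * δ ^ e + B * δ) (𝓝[>] 0) (𝓝 0) := by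
    have hcont : ContinuousAt (fun δ : ℝ => A * δ ^ e + B * δ) 0 :=
      (continuousAt_const.mul (Real.continuousAt_rpow_const 0 e (Or.inr he.le))).add
        (continuousAt_const.mul continuousAt_id)
    simpa [Real.zero_rpow he.ne'] using hcont.tendsto.mono_left nhdsWithin_le_nhds
  exact ge_of_tendsto hlim (mem_of_superset (Ioo_mem_nhdsGT one_pos) h)

theorem bilinear_exponent_lower_bound_general
    (p C c c₀ c₁ c₂ : ℝ) (hp : 0 < p) (hC : 0 < C) (hc : 0 < c)
    (B : Set (ℝ × ℝ × ℝ)) (hBmeas : MeasurableSet B) (hBpos : 0 < volume B)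
    (H1 : ∀ δ ∈ Set.Ioo (0 : ℝ) 1, ∀ 𝒯₁ 𝒯₂ : Finset TubeData,
      (∀ T ∈ 𝒯₁, T.2.1 ^ 2 + T.2.2 ^ 2 = 1 ∧
        Real.sqrt ((T.2.1 - 1) ^ 2 + T.2.2 ^ 2) ≤ c₀) →
      (∀ T ∈ 𝒯₂, T.2.1 ^ 2 + T.2.2 ^ 2 = 1 ∧
        Real.sqrt (T.2.1 ^ 2 + (T.2.2 - 1) ^ 2) ≤ c₀) →
      ∫ x : ℝ × ℝ × ℝ, (tubeSum δ 𝒯₁ x) ^ p * (tubeSum δ 𝒯₂ x) ^ p ≤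
        C * δ ^ 4 * ((𝒯₁.card : ℝ) ^ p * (𝒯₂.card : ℝ) ^ p +
          (𝒯₁.card : ℝ) + (𝒯₂.card : ℝ)))
    (H2 : ∀ δ ∈ Set.Ioo (0 : ℝ) 1, ∃ 𝒯₁ 𝒯₂ : Finset TubeData,
      (∀ T ∈ 𝒯₁, T.2.1 ^ 2 + T.2.2 ^ 2 = 1 ∧
        Real.sqrt ((T.2.1 - 1) ^ 2 + T.2.2 ^ 2) ≤ c₀) ∧
      (∀ T ∈ 𝒯₂, T.2.1 ^ 2 + T.2.2 ^ 2 = 1 ∧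
        Real.sqrt (T.2.1 ^ 2 + (T.2.2 - 1) ^ 2) ≤ c₀) ∧
      c₁ * δ⁻¹ ^ 3 ≤ (𝒯₁.card : ℝ) ∧ (𝒯₁.card : ℝ) ≤ c₂ * δ⁻¹ ^ 3 ∧
      c₁ * δ⁻¹ ^ 3 ≤ (𝒯₂.card : ℝ) ∧ (𝒯₂.card : ℝ) ≤ c₂ * δ⁻¹ ^ 3 ∧
      (∀ x ∈ B, c ≤ tubeSum δ 𝒯₁ x) ∧ (∀ x ∈ B, c ≤ tubeSum δ 𝒯₂ x)) :
    (2 : ℝ) / 3 ≤ p := by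
  by_contra! hp_lt
  obtain ⟨_, _, -, -, -, -, -, -, hB_half, -⟩ := H2 (1 / 2) ⟨by norm_num, by norm_num⟩
  have hB_real : 0 < volume.real B :=
    ENNReal.toReal_pos hBpos.ne' (volume_lt_top_of_le_tubeSum hc hB_half).ne
  have hK : 0 < c ^ p * c ^ p * volume.real B := by positivity
  refine hK.not_ge (nonpos_of_forall_le_rpow_add_mul (A := C * (c₂ ^ p * c₂ ^ p))
    (B := 2 * C * c₂) (e := 4 - 6 * p) (by linarith) fun δ hδ => ?_)
  obtain ⟨𝒯₁, 𝒯₂, hdir₁, hdir₂, -, hcard₁, -, hcard₂, hB₁, hB₂⟩ := H2 δ hδ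
  have hrhs := mul_le_mul_of_nonneg_left (pow_four_mul_le_of_le_mul_inv_pow_three hδ.1 hp.le
    (Nat.cast_nonneg _) (Nat.cast_nonneg _) hcard₁ hcard₂) hC.le
  calc c ^ p * c ^ p * volume.real B
      ≤ ∫ x, tubeSum δ 𝒯₁ x ^ p * tubeSum δ 𝒯₂ x ^ p :=
        rpow_mul_rpow_mul_volume_le_integral hp hc hBmeas hB₁ hB₂
    _ ≤ C * δ ^ 4 * ((𝒯₁.card : ℝ) ^ p * (𝒯₂.card : ℝ) ^ p + 𝒯₁.card + 𝒯₂.card) :=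
        H1 δ hδ 𝒯₁ 𝒯₂ hdir₁ hdir₂
    _ ≤ C * (c₂ ^ p * c₂ ^ p) * δ ^ (4 - 6 * p) + 2 * C * c₂ * δ := by linarith

/-- If the bilinear Heisenberg Kakeya inequality with exponent p holds for all
transversal pairs of families of Heisenberg δ-tubes, and there exist families of
∼δ⁻³ tubes each of whose counting function dominates a fixed ball of positive
measure, then p ≥ 2/3. -/
theorem bilinear_exponent_lower_bound
    (p C c c₀ c₁ c₂ : ℝ) (hp : 0 < p) (hC : 0 < C) (hc : 0 < c)
    (hc₀ : 0 < c₀) (hc₁ : 0 < c₁) (hc₂ : 0 < c₂)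
    (B : Set (ℝ × ℝ × ℝ)) (hBmeas : MeasurableSet B) (hBpos : 0 < volume B)
    (H1 : ∀ δ ∈ Set.Ioo (0 : ℝ) 1, ∀ 𝒯₁ 𝒯₂ : Finset TubeData,
      (∀ T ∈ 𝒯₁, T.2.1 ^ 2 + T.2.2 ^ 2 = 1 ∧
        Real.sqrt ((T.2.1 - 1) ^ 2 + T.2.2 ^ 2) ≤ c₀) →
      (∀ T ∈ 𝒯₂, T.2.1 ^ 2 + T.2.2 ^ 2 = 1 ∧
        Real.sqrt (T.2.1 ^ 2 + (T.2.2 - 1) ^ 2) ≤ c₀) →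
      ∫ x : ℝ × ℝ × ℝ, (tubeSum δ 𝒯₁ x) ^ p * (tubeSum δ 𝒯₂ x) ^ p ≤
        C * δ ^ 4 * ((𝒯₁.card : ℝ) ^ p * (𝒯₂.card : ℝ) ^ p +
          (𝒯₁.card : ℝ) + (𝒯₂.card : ℝ)))
    (H2 : ∀ δ ∈ Set.Ioo (0 : ℝ) 1, ∃ 𝒯₁ 𝒯₂ : Finset TubeData,
      (∀ T ∈ 𝒯₁, T.2.1 ^ 2 + T.2.2 ^ 2 = 1 ∧
        Real.sqrt ((T.2.1 - 1) ^ 2 + T.2.2 ^ 2) ≤ c₀) ∧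
      (∀ T ∈ 𝒯₂, T.2.1 ^ 2 + T.2.2 ^ 2 = 1 ∧
        Real.sqrt (T.2.1 ^ 2 + (T.2.2 - 1) ^ 2) ≤ c₀) ∧
      c₁ * δ⁻¹ ^ 3 ≤ (𝒯₁.card : ℝ) ∧ (𝒯₁.card : ℝ) ≤ c₂ * δ⁻¹ ^ 3 ∧
      c₁ * δ⁻¹ ^ 3 ≤ (𝒯₂.card : ℝ) ∧ (𝒯₂.card : ℝ) ≤ c₂ * δ⁻¹ ^ 3 ∧
      (∀ x ∈ B, c ≤ tubeSum δ 𝒯₁ x) ∧ (∀ x ∈ B, c ≤ tubeSum δ 𝒯₂ x)) :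
    (2 : ℝ) / 3 ≤ p :=
  bilinear_exponent_lower_bound_general p C c c₀ c₁ c₂ hp hC hc B hBmeas hBpos H1 H2
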